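/- Let ρ : ℝ × ℝ² → ℝ be smooth with ρ(t,x) > 0 everywhere, let u, B : ℝ × ℝ² → ℝ² be smooth, and let A : ℝ × ℝ² → M₂(ℝ) be smooth, satisfying: (i) ∂ₜρ + div(ρu) = 0; (ii) ∂ₜB = ∇×(u × B) and div B = 0, where u × B := u₁B₂ − u₂B₁ and ∇×φ := (∂₂φ, −∂₁φ); (iii) ∂ₜA + (u·∇)A + A(∇u) = 0 with (∇u)ᵢⱼ = ∂ⱼuᵢ. Let x : ℝ × ℝ² → ℝ² be a smooth flow map of u, i.e. ∂ₜx(t,α) = u(t, x(t,α)) and x(0,α) = α for all α ∈ ℝ². Then for all t ∈ ℝ and α ∈ ℝ², (ρ⁻¹ A·B)(t, x(t,α)) = (ρ⁻¹ A·B)(0, α), where A·B denotes the matrix A applied to the column vector B. -/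

import Mathlib

/-- Time derivative of a function on spacetime `ℝ × ℝ²`. -/
noncomputable def Dt (f : ℝ × ℝ × ℝ → ℝ) : ℝ × ℝ × ℝ → ℝ := fun p => fderiv ℝ f p (1, 0, 0)

/-- Spatial partial derivative in `x₁`. -/
noncomputable def Dx1 (f : ℝ × ℝ × ℝ → ℝ) : ℝ × ℝ × ℝ → ℝ := fun p => fderiv ℝ f p (0, 1, 0)

/-- Spatial partial derivative in `x₂`. -/
noncomputable def Dx2 (f : ℝ × ℝ × ℝ → ℝ) : ℝ × ℝ × ℝ → ℝ := fun p => fderiv ℝ f p (0, 0, 1)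

/-- The spatial Jacobian matrix of a velocity field `u`, `(∇u)ᵢⱼ = ∂ⱼuᵢ`. -/
noncomputable def gradU (u : ℝ × ℝ × ℝ → ℝ × ℝ) (p : ℝ × ℝ × ℝ) : Matrix (Fin 2) (Fin 2) ℝ :=
  !![Dx1 (fun q => (u q).1) p, Dx2 (fun q => (u q).1) p;
     Dx1 (fun q => (u q).2) p, Dx2 (fun q => (u q).2) p]

lemma fd_mul_apply {f g : ℝ × ℝ × ℝ → ℝ} {p : ℝ × ℝ × ℝ} (hf : DifferentiableAt ℝ f p)
    (hg : DifferentiableAt ℝ g p) (v : ℝ × ℝ × ℝ) :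
    fderiv ℝ (fun q => f q * g q) p v = f p * fderiv ℝ g p v + g p * fderiv ℝ f p v := by
  rw [fderiv_fun_mul hf hg]; simp [smul_eq_mul]

lemma fd_sub_apply {f g : ℝ × ℝ × ℝ → ℝ} {p : ℝ × ℝ × ℝ} (hf : DifferentiableAt ℝ f p)
    (hg : DifferentiableAt ℝ g p) (v : ℝ × ℝ × ℝ) :
    fderiv ℝ (fun q => f q - g q) p v = fderiv ℝ f p v - fderiv ℝ g p v := by
  rw [fderiv_fun_sub hf hg]; rfl

lemma fd_add_apply {f g : ℝ × ℝ × ℝ → ℝ} {p : ℝ × ℝ × ℝ} (hf : DifferentiableAt ℝ f p)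
    (hg : DifferentiableAt ℝ g p) (v : ℝ × ℝ × ℝ) :
    fderiv ℝ (fun q => f q + g q) p v = fderiv ℝ f p v + fderiv ℝ g p v := by
  rw [fderiv_fun_add hf hg]; rfl

lemma fd_split (f : ℝ × ℝ × ℝ → ℝ) (p : ℝ × ℝ × ℝ) (w : ℝ × ℝ) :
    fderiv ℝ f p (1, w) = Dt f p + w.1 * Dx1 f p + w.2 * Dx2 f p := by
  have h : ((1:ℝ), w) = ((1:ℝ),(0:ℝ),(0:ℝ)) + w.1 • ((0:ℝ),(1:ℝ),(0:ℝ))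
      + w.2 • ((0:ℝ),(0:ℝ),(1:ℝ)) := by
    simp [Prod.ext_iff]
  rw [h, map_add, map_add, map_smul, map_smul, Dt, Dx1, Dx2, smul_eq_mul, smul_eq_mul]

/-- Proposition 1.1 of the paper: the quantity `ρ⁻¹ A B` is constant along the
particle trajectories of the flow. -/
theorem rho_inv_AB_constant_along_flow
    (ρ : ℝ × ℝ × ℝ → ℝ) (u B : ℝ × ℝ × ℝ → ℝ × ℝ)
    (A : ℝ × ℝ × ℝ → Matrix (Fin 2) (Fin 2) ℝ)
    (x : ℝ → ℝ × ℝ → ℝ × ℝ)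
    (hρ : ContDiff ℝ (⊤ : ℕ∞) ρ) (hρpos : ∀ p, 0 < ρ p)
    (hu : ContDiff ℝ (⊤ : ℕ∞) u) (hB : ContDiff ℝ (⊤ : ℕ∞) B)
    (hA : ∀ i j, ContDiff ℝ (⊤ : ℕ∞) (fun p => A p i j))
    (hx : ContDiff ℝ (⊤ : ℕ∞) (fun p : ℝ × ℝ × ℝ => x p.1 p.2))
    (hcont : ∀ p, Dt ρ p + Dx1 (fun q => ρ q * (u q).1) p + Dx2 (fun q => ρ q * (u q).2) p = 0)
    (hind1 : ∀ p, Dt (fun q => (B q).1) p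
      = Dx2 (fun q => (u q).1 * (B q).2 - (u q).2 * (B q).1) p)
    (hind2 : ∀ p, Dt (fun q => (B q).2) p
      = -(Dx1 (fun q => (u q).1 * (B q).2 - (u q).2 * (B q).1) p))
    (hdivB : ∀ p, Dx1 (fun q => (B q).1) p + Dx2 (fun q => (B q).2) p = 0)
    (hAeq : ∀ p (i j : Fin 2),
      Dt (fun q => A q i j) p
        + (u p).1 * Dx1 (fun q => A q i j) p
        + (u p).2 * Dx2 (fun q => A q i j) p
        + (A p * gradU u p) i j = 0)
    (hflow : ∀ t α, deriv (fun s => x s α) t = u (t, x t α))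
    (hflow0 : ∀ α, x 0 α = α) :
    ∀ (t : ℝ) (α : ℝ × ℝ) (i : Fin 2),
      ((A (t, x t α)).mulVec ![(B (t, x t α)).1, (B (t, x t α)).2] i) / ρ (t, x t α)
        = ((A (0, α)).mulVec ![(B (0, α)).1, (B (0, α)).2] i) / ρ (0, α) := by
  intro t α i
  -- component functions
  set u1 : ℝ × ℝ × ℝ → ℝ := fun q => (u q).1 with hu1def
  set u2 : ℝ × ℝ × ℝ → ℝ := fun q => (u q).2 with hu2def
  set b1 : ℝ × ℝ × ℝ → ℝ := fun q => (B q).1 with hb1def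
  set b2 : ℝ × ℝ × ℝ → ℝ := fun q => (B q).2 with hb2def
  set a0 : ℝ × ℝ × ℝ → ℝ := fun q => A q i 0 with ha0def
  set a1 : ℝ × ℝ × ℝ → ℝ := fun q => A q i 1 with ha1def
  have du1 : Differentiable ℝ u1 := (contDiff_fst.comp hu).differentiable (by simp)
  have du2 : Differentiable ℝ u2 := (contDiff_snd.comp hu).differentiable (by simp)
  have db1 : Differentiable ℝ b1 := (contDiff_fst.comp hB).differentiable (by simp)
  have db2 : Differentiable ℝ b2 := (contDiff_snd.comp hB).differentiable (by simp)
  have da0 : Differentiable ℝ a0 := (hA i 0).differentiable (by simp)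
  have da1 : Differentiable ℝ a1 := (hA i 1).differentiable (by simp)
  have dρ : Differentiable ℝ ρ := hρ.differentiable (by simp)
  -- the flux function G and divergence c
  set G : ℝ × ℝ × ℝ → ℝ := fun q => a0 q * b1 q + a1 q * b2 q with hGdef
  set c : ℝ × ℝ × ℝ → ℝ := fun q => -(Dx1 u1 q + Dx2 u2 q) with hcdef
  have dG : Differentiable ℝ G :=
    ((da0.mul db1).add (da1.mul db2))
  -- material derivative of ρ
  have hmatρ : ∀ p, fderiv ℝ ρ p (1, u p) = c p * ρ p := by
    intro p
    have h := hcont p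
    have e1 : Dx1 (fun q => ρ q * u1 q) p
        = ρ p * Dx1 u1 p + u1 p * Dx1 ρ p := fd_mul_apply (dρ p) (du1 p) _
    have e2 : Dx2 (fun q => ρ q * u2 q) p
        = ρ p * Dx2 u2 p + u2 p * Dx2 ρ p := fd_mul_apply (dρ p) (du2 p) _
    rw [fd_split]
    rw [e1, e2] at h
    simp only [hcdef]
    linarith
  -- material derivatives of B components
  have hmatb1 : ∀ p, Dt b1 p + u1 p * Dx1 b1 p + u2 p * Dx2 b1 p
      = b2 p * Dx2 u1 p - b1 p * Dx2 u2 p := by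
    intro p
    have h1 := hind1 p
    have e : Dx2 (fun q => u1 q * b2 q - u2 q * b1 q) p
        = (u1 p * Dx2 b2 p + b2 p * Dx2 u1 p) - (u2 p * Dx2 b1 p + b1 p * Dx2 u2 p) := by
      have := fd_sub_apply (f := fun q => u1 q * b2 q) (g := fun q => u2 q * b1 q)
        ((du1 p).mul (db2 p)) ((du2 p).mul (db1 p)) ((0:ℝ),(0:ℝ),(1:ℝ))
      simp only [Dx2] at this ⊢
      rw [this, fd_mul_apply (du1 p) (db2 p), fd_mul_apply (du2 p) (db1 p)]
    rw [e] at h1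
    have h2 := hdivB p
    linear_combination h1 + u1 p * h2
  have hmatb2 : ∀ p, Dt b2 p + u1 p * Dx1 b2 p + u2 p * Dx2 b2 p
      = b1 p * Dx1 u2 p - b2 p * Dx1 u1 p := by
    intro p
    have h1 := hind2 p
    have e : Dx1 (fun q => u1 q * b2 q - u2 q * b1 q) p
        = (u1 p * Dx1 b2 p + b2 p * Dx1 u1 p) - (u2 p * Dx1 b1 p + b1 p * Dx1 u2 p) := by
      have := fd_sub_apply (f := fun q => u1 q * b2 q) (g := fun q => u2 q * b1 q)
        ((du1 p).mul (db2 p)) ((du2 p).mul (db1 p)) ((0:ℝ),(1:ℝ),(0:ℝ))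
      simp only [Dx1] at this ⊢
      rw [this, fd_mul_apply (du1 p) (db2 p), fd_mul_apply (du2 p) (db1 p)]
    rw [e] at h1
    have h2 := hdivB p
    linear_combination h1 + u2 p * h2
  -- material derivatives of A rows
  have hmata0 : ∀ p, Dt a0 p + u1 p * Dx1 a0 p + u2 p * Dx2 a0 p
      = -(a0 p * Dx1 u1 p + a1 p * Dx1 u2 p) := by
    intro p
    have h := hAeq p i 0
    simp [gradU, Matrix.mul_apply, Fin.sum_univ_two] at h
    simp only [ha0def, ha1def, hu1def, hu2def]
    linarith
  have hmata1 : ∀ p, Dt a1 p + u1 p * Dx1 a1 p + u2 p * Dx2 a1 p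
      = -(a0 p * Dx2 u1 p + a1 p * Dx2 u2 p) := by
    intro p
    have h := hAeq p i 1
    simp [gradU, Matrix.mul_apply, Fin.sum_univ_two] at h
    simp only [ha0def, ha1def, hu1def, hu2def]
    linarith
  -- material derivative of G
  have hmatG : ∀ p, fderiv ℝ G p (1, u p) = c p * G p := by
    intro p
    rw [fd_split]
    have expand : ∀ v : ℝ × ℝ × ℝ, fderiv ℝ G p v
        = a0 p * fderiv ℝ b1 p v + b1 p * fderiv ℝ a0 p v
          + (a1 p * fderiv ℝ b2 p v + b2 p * fderiv ℝ a1 p v) := by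
      intro v
      rw [hGdef]
      rw [fd_add_apply (f := fun q => a0 q * b1 q) (g := fun q => a1 q * b2 q) ((da0 p).mul (db1 p)) ((da1 p).mul (db2 p)),
        fd_mul_apply (da0 p) (db1 p), fd_mul_apply (da1 p) (db2 p)]
    simp only [Dt, Dx1, Dx2] at *
    rw [expand, expand, expand]
    have h1 := hmatb1 p
    have h2 := hmatb2 p
    have h3 := hmata0 p
    have h4 := hmata1 p
    simp only [Dt, Dx1, Dx2, hcdef] at h1 h2 h3 h4 ⊢
    linear_combination a0 p * h1 + a1 p * h2 + b1 p * h3 + b2 p * h4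
  -- flow trajectories
  have hγd : ∀ s : ℝ, HasDerivAt (fun s => ((s, x s α) : ℝ × ℝ × ℝ)) (1, u (s, x s α)) s := by
    intro s
    have hxc : Differentiable ℝ (fun s : ℝ => x s α) :=
      (hx.comp (contDiff_id.prodMk contDiff_const)).differentiable (by simp)
    have hxd : HasDerivAt (fun s => x s α) (u (s, x s α)) s := by
      have := (hxc s).hasDerivAt
      rwa [hflow s α] at this
    exact (hasDerivAt_id s).prodMk hxd
  -- pull back along trajectories
  have hGtraj : ∀ s : ℝ, HasDerivAt (fun s => G (s, x s α))
      (c (s, x s α) * G (s, x s α)) s := by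
    intro s
    have := ((dG (s, x s α)).hasFDerivAt).comp_hasDerivAt s (hγd s)
    rwa [hmatG (s, x s α)] at this
  have hρtraj : ∀ s : ℝ, HasDerivAt (fun s => ρ (s, x s α))
      (c (s, x s α) * ρ (s, x s α)) s := by
    intro s
    have := ((dρ (s, x s α)).hasFDerivAt).comp_hasDerivAt s (hγd s)
    rwa [hmatρ (s, x s α)] at this
  -- the ratio is constant
  have hquot : ∀ s : ℝ, HasDerivAt (fun s => G (s, x s α) / ρ (s, x s α)) 0 s := by
    intro s
    have h := (hGtraj s).fun_div (hρtraj s) (ne_of_gt (hρpos (s, x s α)))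
    exact h.congr_deriv (by ring)
  have hconst : G (t, x t α) / ρ (t, x t α) = G (0, x 0 α) / ρ (0, x 0 α) :=
    is_const_of_deriv_eq_zero (fun s => (hquot s).differentiableAt)
      (fun s => (hquot s).deriv) t 0
  rw [hflow0] at hconst
  have hmv : ∀ p : ℝ × ℝ × ℝ,
      (A p).mulVec ![(B p).1, (B p).2] i = G p := by
    intro p
    simp [Matrix.mulVec, dotProduct, Fin.sum_univ_two, Matrix.vecHead, Matrix.vecTail,
      Function.comp, hGdef, ha0def, ha1def, hb1def, hb2def]
  rw [hmv, hmv]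
  exact hconst
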